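/- Let L ≥ 2 and let h₁, h₂ be curtains in a CAT(0) space that are not L-separated. Then for any ball B of radius r ≤ (L−1)/2, there exists a curtain meeting both h₁ and h₂ that is disjoint from B. -/

import Mathlib

open Metric Set

namespace Curtains

/-- A CAT(0) space: a metric space in which midpoints exist and the
Bruhat–Tits CN comparison inequality holds. -/
class CAT0 (X : Type*) [MetricSpace X] : Prop where
  midpoint : ∀ x y : X, ∃ m : X, dist x m = dist x y / 2 ∧ dist y m = dist x y / 2
  cn : ∀ x y z m : X, dist x m = dist x y / 2 → dist y m = dist x y / 2 →
    dist z m ^ 2 ≤ (dist z x ^ 2 + dist z y ^ 2) / 2 - dist x y ^ 2 / 4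

variable {X : Type*} [MetricSpace X]

/-- `γ` is a unit-speed geodesic on the set `I ⊆ ℝ`. -/
def IsGeodesicOn (γ : ℝ → X) (I : Set ℝ) : Prop :=
  ∀ s ∈ I, ∀ t ∈ I, dist (γ s) (γ t) = |s - t|

/-- `γ` parametrises the geodesic segment `[x,y]` by `[0, dist x y]`. -/
def IsGeoSeg (γ : ℝ → X) (x y : X) : Prop :=
  γ 0 = x ∧ γ (dist x y) = y ∧ IsGeodesicOn γ (Icc 0 (dist x y))

/-- The geodesic segment `[x,y]` as a subset of `X`. -/
def seg (γ : ℝ → X) (x y : X) : Set X := γ '' Icc 0 (dist x y)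

/-- A geodesic defined on an interval `I ⊆ ℝ`, together with a choice of
closest-point projection onto it. -/
structure Geodesic (X : Type*) [MetricSpace X] where
  I : Set ℝ
  ordConn : I.OrdConnected
  map : ℝ → X
  isom : IsGeodesicOn map I
  proj : X → ℝ
  proj_mem : ∀ x : X, proj x ∈ I
  proj_min : ∀ x : X, ∀ t ∈ I, dist x (map (proj x)) ≤ dist x (map t)

/-- A curtain: the preimage under the closest-point projection of a length-one
subsegment (the pole) not containing the endpoints of the geodesic. -/
structure Curtain (X : Type*) [MetricSpace X] where
  geo : Geodesic X
  r : ℝ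
  pole_in_interior : Icc (r - 1/2) (r + 1/2) ⊆ interior geo.I

namespace Curtain

variable (h : Curtain X)

/-- The curtain as a subset of `X`. -/
def carrier : Set X := {x | h.geo.proj x ∈ Icc (h.r - 1/2) (h.r + 1/2)}

/-- The negative halfspace `h⁻`. -/
def minus : Set X := {x | h.geo.proj x < h.r - 1/2}

/-- The positive halfspace `h⁺`. -/
def plus : Set X := {x | h.r + 1/2 < h.geo.proj x}

/-- The pole of the curtain. -/
def pole : Set X := h.geo.map '' Icc (h.r - 1/2) (h.r + 1/2)

/-- `h` is dual to the geodesic segment from `x` to `y` parametrised by `γ`. -/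
def DualToSeg (γ : ℝ → X) (x y : X) : Prop :=
  h.geo.I = Icc 0 (dist x y) ∧ ∀ t ∈ Icc (0:ℝ) (dist x y), h.geo.map t = γ t

/-- `h` separates the set `A` from the set `B`. -/
def SeparatesSets (A B : Set X) : Prop :=
  (A ⊆ h.minus ∧ B ⊆ h.plus) ∨ (A ⊆ h.plus ∧ B ⊆ h.minus)

/-- `h` separates the point `x` from the point `y`. -/
def SeparatesPts (x y : X) : Prop := h.SeparatesSets {x} {y}

end Curtain

/-- Two curtains meet if their carriers intersect. -/
def Meets (h k : Curtain X) : Prop := (h.carrier ∩ k.carrier).Nonempty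

/-- A (finite) chain of curtains: pairwise disjoint, and each member separates
its neighbours. -/
def IsChainSeq {n : ℕ} (c : Fin n → Curtain X) : Prop :=
  (∀ i j, i ≠ j → Disjoint (c i).carrier (c j).carrier) ∧
  (∀ i j k : Fin n, (i : ℕ) + 1 = j → (j : ℕ) + 1 = k →
    (c j).SeparatesSets (c i).carrier (c k).carrier)

/-- An infinite chain of curtains indexed by `ℕ`. -/
def IsChainSeqNat (c : ℕ → Curtain X) : Prop :=
  (∀ i j, i ≠ j → Disjoint (c i).carrier (c j).carrier) ∧
  (∀ i, (c (i+1)).SeparatesSets (c i).carrier (c (i+2)).carrier)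

/-- Two disjoint curtains are `L`-separated if every chain of curtains meeting
both has cardinality at most `L`. -/
def LSeparated (L : ℕ∞) (h h' : Curtain X) : Prop :=
  Disjoint h.carrier h'.carrier ∧
  ∀ (n : ℕ) (c : Fin n → Curtain X), IsChainSeq c →
    (∀ i, Meets (c i) h ∧ Meets (c i) h') → (n : ℕ∞) ≤ L

/-- Real-valued variant of `L`-separation. -/
def LSeparatedR (L : ℝ) (h h' : Curtain X) : Prop :=
  Disjoint h.carrier h'.carrier ∧
  ∀ (n : ℕ) (c : Fin n → Curtain X), IsChainSeq c →
    (∀ i, Meets (c i) h ∧ Meets (c i) h') → (n : ℝ) ≤ L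

/-- An `L`-chain: a chain whose members are pairwise `L`-separated. -/
def IsLChain (L : ℕ∞) {n : ℕ} (c : Fin n → Curtain X) : Prop :=
  IsChainSeq c ∧ ∀ i j, i ≠ j → LSeparated L (c i) (c j)

/-- An infinite `L`-chain indexed by `ℕ`. -/
def IsLChainNat (L : ℕ∞) (c : ℕ → Curtain X) : Prop :=
  IsChainSeqNat c ∧ ∀ i j, i ≠ j → LSeparated L (c i) (c j)

/-- A chain separates `x` from `y` if every member does. -/
def SeparatesChain {n : ℕ} (c : Fin n → Curtain X) (x y : X) : Prop :=
  ∀ i, (c i).SeparatesPts x y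

/-- The maximal cardinality of an `L`-chain separating `x` from `y`. -/
noncomputable def chainNum (L : ℕ∞) (x y : X) : ℕ :=
  sSup {m : ℕ | ∃ c : Fin m → Curtain X, IsLChain L c ∧ SeparatesChain c x y}

open Classical in
/-- The curtain metric `d_L`. -/
noncomputable def dL (L : ℕ∞) (x y : X) : ℝ :=
  if x = y then 0 else 1 + (chainNum L x y : ℝ)

/-- A geodesic is `D`-contracting if every ball disjoint from it projects to a
set of diameter at most `D`. -/
def Geodesic.Contracting (g : Geodesic X) (D : ℝ) : Prop :=
  ∀ (x : X) (ρ : ℝ), Disjoint (closedBall x ρ) (g.map '' g.I) →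
    Metric.diam (g.map '' (g.proj '' closedBall x ρ)) ≤ D


section Aux

variable {X : Type*} [MetricSpace X]

/-- CN inequality along a geodesic, for parameters in `I`. -/
lemma geo_cn [CAT0 X] (g : Geodesic X) {s t : ℝ} (hs : s ∈ g.I) (ht : t ∈ g.I) (z : X) :
    dist z (g.map ((s + t) / 2)) ^ 2 ≤
      (dist z (g.map s) ^ 2 + dist z (g.map t) ^ 2) / 2 - (s - t) ^ 2 / 4 := by
  have hm : (s + t) / 2 ∈ g.I := by
    rcases le_total s t with h | h
    · exact g.ordConn.out hs ht ⟨by linarith, by linarith⟩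
    · exact g.ordConn.out ht hs ⟨by linarith, by linarith⟩
  have hst : dist (g.map s) (g.map t) = |s - t| := g.isom s hs t ht
  have h1 : dist (g.map s) (g.map ((s + t) / 2)) = dist (g.map s) (g.map t) / 2 := by
    rw [g.isom s hs _ hm, hst]
    have : s - (s + t) / 2 = (s - t) / 2 := by ring
    rw [this, abs_div]
    norm_num
  have h2 : dist (g.map t) (g.map ((s + t) / 2)) = dist (g.map s) (g.map t) / 2 := by
    rw [g.isom t ht _ hm, hst]
    have : t - (s + t) / 2 = -((s - t) / 2) := by ring
    rw [this, abs_neg, abs_div]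
    norm_num
  have hcn := CAT0.cn (g.map s) (g.map t) z (g.map ((s + t) / 2)) h1 h2
  have habs : dist (g.map s) (g.map t) ^ 2 = (s - t) ^ 2 := by
    rw [hst, sq_abs]
  linarith [hcn, habs.ge, habs.le]

/-- Strong convexity of the squared distance along a geodesic:
the nearest-point projection satisfies a Pythagorean lower bound. -/
lemma strong_convexity [CAT0 X] (g : Geodesic X) (x : X) {t : ℝ} (ht : t ∈ g.I) :
    dist x (g.map (g.proj x)) ^ 2 + (t - g.proj x) ^ 2 ≤ dist x (g.map t) ^ 2 := by
  set a := g.proj x with ha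
  have haI : a ∈ g.I := g.proj_mem x
  have main : ∀ N : ℕ, ∀ t ∈ g.I,
      dist x (g.map a) ^ 2 + (1 - (1/2 : ℝ) ^ N) * (t - a) ^ 2 ≤ dist x (g.map t) ^ 2 := by
    intro N
    induction N with
    | zero =>
      intro t ht
      have h := g.proj_min x t ht
      have := pow_le_pow_left₀ dist_nonneg h 2
      simpa using this
    | succ N ih =>
      intro t ht
      have hm : (a + t) / 2 ∈ g.I := by
        rcases le_total a t with h | h
        · exact g.ordConn.out haI ht ⟨by linarith, by linarith⟩
        · exact g.ordConn.out ht haI ⟨by linarith, by linarith⟩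
      have hcn := geo_cn g haI ht x
      have hih := ih ((a + t) / 2) hm
      have hmid : ((a + t) / 2 - a) ^ 2 = (t - a) ^ 2 / 4 := by ring
      rw [hmid] at hih
      have hpow : (1/2 : ℝ) ^ (N + 1) = (1/2 : ℝ) ^ N / 2 := by
        rw [pow_succ]; ring
      rw [hpow]
      nlinarith [hcn, hih]
  have htend : Filter.Tendsto
      (fun N : ℕ => dist x (g.map a) ^ 2 + (1 - (1/2 : ℝ) ^ N) * (t - a) ^ 2)
      Filter.atTop (nhds (dist x (g.map a) ^ 2 + (1 - 0) * (t - a) ^ 2)) := by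
    have h0 : Filter.Tendsto (fun N : ℕ => (1/2 : ℝ) ^ N) Filter.atTop (nhds 0) :=
      tendsto_pow_atTop_nhds_zero_of_lt_one (by norm_num) (by norm_num)
    exact Filter.Tendsto.const_add _ (((h0.const_sub 1).mul_const _))
  have := le_of_tendsto htend (Filter.Eventually.of_forall fun N => main N t ht)
  linarith [this]

/-- The roundness-2 (quadrilateral) inequality in CAT(0) spaces. -/
lemma roundness2 [CAT0 X] (x y p q : X) :
    dist x q ^ 2 + dist y p ^ 2 ≤
      dist x y ^ 2 + dist p q ^ 2 + dist x p ^ 2 + dist y q ^ 2 := by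
  obtain ⟨m, h1, h2⟩ := CAT0.midpoint x q
  have cn1 := CAT0.cn x q y m h1 h2
  have cn2 := CAT0.cn x q p m h1 h2
  have tri : dist y p ≤ dist y m + dist p m := by
    rw [dist_comm p m]; exact dist_triangle y m p
  have h5 : dist y p ^ 2 ≤ 2 * dist y m ^ 2 + 2 * dist p m ^ 2 := by
    nlinarith [tri, sq_nonneg (dist y m - dist p m), dist_nonneg (x := y) (y := p),
      dist_nonneg (x := y) (y := m), dist_nonneg (x := p) (y := m)]
  have e1 : dist y x = dist x y := dist_comm y x
  have e2 : dist p x = dist x p := dist_comm p x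
  rw [e1] at cn1
  rw [e2] at cn2
  linarith [cn1, cn2, h5]

/-- The closest-point projection is 1-Lipschitz (as a map to pole coordinates). -/
lemma dist_proj_le [CAT0 X] (g : Geodesic X) (x y : X) :
    |g.proj x - g.proj y| ≤ dist x y := by
  set a := g.proj x
  set b := g.proj y
  have hb : b ∈ g.I := g.proj_mem y
  have ha : a ∈ g.I := g.proj_mem x
  have h1 := strong_convexity g x hb
  have h2 := strong_convexity g y ha
  have h3 := roundness2 x y (g.map a) (g.map b)
  have habq : dist (g.map a) (g.map b) ^ 2 = (a - b) ^ 2 := by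
    rw [g.isom a ha b hb, sq_abs]
  by_contra hcon
  push_neg at hcon
  have h4 : dist x y ^ 2 < (a - b) ^ 2 := by
    have h5 : dist x y < |a - b| := hcon
    have := mul_self_lt_mul_self dist_nonneg h5
    calc dist x y ^ 2 = dist x y * dist x y := sq (dist x y) ▸ by ring
      _ < |a - b| * |a - b| := this
      _ = (a - b) ^ 2 := by rw [← abs_mul, abs_mul_self, sq]
  nlinarith [h1, h2, h3, habq.le, habq.ge]

lemma proj_map_self (g : Geodesic X) {t : ℝ} (ht : t ∈ g.I) : g.proj (g.map t) = t := by
  have h := g.proj_min (g.map t) t ht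
  simp only [dist_self] at h
  have h0 : dist (g.map t) (g.map (g.proj (g.map t))) = 0 :=
    le_antisymm h dist_nonneg
  have := g.isom t ht _ (g.proj_mem (g.map t))
  rw [this] at h0
  have := abs_eq_zero.mp h0
  linarith

lemma Curtain.carrier_nonempty (A : Curtain X) : A.carrier.Nonempty := by
  have hI : A.r ∈ A.geo.I := by
    have : A.r ∈ Icc (A.r - 1/2) (A.r + 1/2) := ⟨by linarith, by linarith⟩
    exact interior_subset (A.pole_in_interior this)
  refine ⟨A.geo.map A.r, ?_⟩
  show A.geo.proj (A.geo.map A.r) ∈ Icc (A.r - 1/2) (A.r + 1/2)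
  rw [proj_map_self A.geo hI]
  exact ⟨by linarith, by linarith⟩

end Aux
section Aux2

variable {X : Type*} [MetricSpace X]

/-- A choice of midpoint. -/
noncomputable def midpt [CAT0 X] (x y : X) : X := (CAT0.midpoint x y).choose

lemma midpt_spec [CAT0 X] (x y : X) :
    dist x (midpt x y) = dist x y / 2 ∧ dist y (midpt x y) = dist x y / 2 :=
  (CAT0.midpoint x y).choose_spec

/-- A dyadic chain of points from `z` to `w` with `2^M` equal steps. -/
lemma midchain [CAT0 X] (z w : X) (M : ℕ) :
    ∃ p : ℕ → X, p 0 = z ∧ p (2 ^ M) = w ∧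
      ∀ i, i < 2 ^ M → dist (p i) (p (i + 1)) = dist z w / 2 ^ M := by
  induction M with
  | zero =>
    refine ⟨fun i => if i = 0 then z else w, by simp, by simp, ?_⟩
    intro i hi
    interval_cases i
    simp
  | succ M ih =>
    obtain ⟨p, hp0, hpN, hcons⟩ := ih
    refine ⟨fun i => if i % 2 = 0 then p (i / 2) else midpt (p (i / 2)) (p (i / 2 + 1)),
      by simpa using hp0, ?_, ?_⟩
    · have h1 : 2 ^ (M + 1) % 2 = 0 := by
        simp [pow_succ, Nat.mul_mod_left]
      have h2 : 2 ^ (M + 1) / 2 = 2 ^ M := by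
        rw [pow_succ, Nat.mul_div_cancel _ (by norm_num)]
      simp [h1, h2, hpN]
    · intro i hi
      rcases Nat.even_or_odd i with ⟨j, hj⟩ | ⟨j, hj⟩
      · subst hj
        have hj2 : j < 2 ^ M := by
          rw [pow_succ] at hi; omega
        have e1 : (j + j) % 2 = 0 := by omega
        have e2 : (j + j) / 2 = j := by omega
        have e3 : (j + j + 1) % 2 = 1 := by omega
        have e4 : (j + j + 1) / 2 = j := by omega
        simp only [e1, e2, e3, e4]
        simp only [if_true]
        rw [if_neg (by decide : ¬(1 = 0))]
        rw [(midpt_spec (p j) (p (j + 1))).1, hcons j hj2]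
        rw [pow_succ]
        push_cast
        ring
      · subst hj
        have hj2 : j < 2 ^ M := by
          rw [pow_succ] at hi; omega
        have e1 : (2 * j + 1) % 2 = 1 := by omega
        have e2 : (2 * j + 1) / 2 = j := by omega
        have e3 : (2 * j + 1 + 1) % 2 = 0 := by omega
        have e4 : (2 * j + 1 + 1) / 2 = j + 1 := by omega
        simp only [e1, e2, e3, e4]
        simp only [if_true]
        rw [if_neg (by decide : ¬(1 = 0))]
        rw [dist_comm (midpt (p j) (p (j+1))) (p (j+1)),
          (midpt_spec (p j) (p (j + 1))).2, hcons j hj2, pow_succ]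
        push_cast
        ring

/-- A taut chain of points realises all pairwise distances. -/
lemma chain_dist (p : ℕ → X) (N : ℕ) (s : ℝ) (hs : 0 ≤ s)
    (hcons : ∀ i, i < N → dist (p i) (p (i + 1)) = s)
    (htot : dist (p 0) (p N) = N * s) :
    ∀ i j, i ≤ j → j ≤ N → dist (p i) (p j) = (j - i : ℕ) * s := by
  have upper : ∀ k i, i + k ≤ N → dist (p i) (p (i + k)) ≤ k * s := by
    intro k
    induction k with
    | zero => simp
    | succ k ih =>
      intro i hik
      have h1 := ih i (by omega)
      have h2 := hcons (i + k) (by omega)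
      calc dist (p i) (p (i + (k + 1))) ≤ dist (p i) (p (i + k)) + dist (p (i + k)) (p (i + k + 1)) := by
            have : i + (k + 1) = i + k + 1 := by omega
            rw [this]; exact dist_triangle _ _ _
        _ ≤ k * s + s := by rw [h2] at *; linarith
        _ = (k + 1 : ℕ) * s := by push_cast; ring
  intro i j hij hjN
  have hu : dist (p i) (p j) ≤ (j - i : ℕ) * s := by
    have := upper (j - i) i (by omega)
    rwa [show i + (j - i) = j by omega] at this
  have hl : (j - i : ℕ) * s ≤ dist (p i) (p j) := by
    have t1 : dist (p 0) (p N) ≤ dist (p 0) (p i) + dist (p i) (p j) + dist (p j) (p N) := by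
      calc dist (p 0) (p N) ≤ dist (p 0) (p j) + dist (p j) (p N) := dist_triangle _ _ _
        _ ≤ dist (p 0) (p i) + dist (p i) (p j) + dist (p j) (p N) := by
            linarith [dist_triangle (p 0) (p i) (p j)]
    have t2 : dist (p 0) (p i) ≤ i * s := by
      have := upper i 0 (by omega); simpa using this
    have t3 : dist (p j) (p N) ≤ (N - j : ℕ) * s := by
      have := upper (N - j) j (by omega)
      rwa [show j + (N - j) = N by omega] at this
    rw [htot] at t1
    have hc : ((j - i : ℕ) : ℝ) = (j : ℝ) - i := by
      push_cast [Nat.cast_sub hij]; ring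
    have hc2 : ((N - j : ℕ) : ℝ) = (N : ℝ) - j := by
      push_cast [Nat.cast_sub hjN]; ring
    rw [hc]
    rw [hc2] at t3
    nlinarith [t1, t2, t3]
  linarith

/-- Discrete crossing lemma: two slabs cannot strictly separate each other's
sides along a fine chain. -/
lemma disc (F G : ℕ → ℝ) (N : ℕ)
    (hF : ∀ i, i < N → |F (i + 1) - F i| ≤ 1)
    (hG : ∀ i, i < N → |G (i + 1) - G i| ≤ 1)
    (hF0 : F 0 < -(1/2)) (hG0 : G 0 < -(1/2)) (hFN : 1/2 < F N)
    (hAB : ∀ i, i ≤ N → |F i| ≤ 1/2 → 1/2 < G i)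
    (hBA : ∀ i, i ≤ N → |G i| ≤ 1/2 → 1/2 < F i) : False := by
  classical
  have hPex : ∃ j, 1/2 < F j ∧ j ≤ N := ⟨N, hFN, le_rfl⟩
  set j₀ := Nat.find hPex with hj₀
  have hj₀F : 1/2 < F j₀ := (Nat.find_spec hPex).1
  have hj₀N : j₀ ≤ N := (Nat.find_spec hPex).2
  have hj₀pos : j₀ ≠ 0 := by
    intro h
    rw [h] at hj₀F
    linarith
  have h1 : ¬(1/2 < F (j₀ - 1) ∧ j₀ - 1 ≤ N) := Nat.find_min hPex (by omega)
  have hF1le : F (j₀ - 1) ≤ 1/2 := by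
    by_contra hcon
    exact h1 ⟨by linarith, by omega⟩
  have hstep : |F (j₀ - 1 + 1) - F (j₀ - 1)| ≤ 1 := hF _ (by omega)
  rw [show j₀ - 1 + 1 = j₀ by omega] at hstep
  have hF1ge : -(1/2) < F (j₀ - 1) := by
    have := abs_le.mp hstep
    linarith [this.1, this.2]
  have hGj : 1/2 < G (j₀ - 1) := hAB _ (by omega) (abs_le.mpr ⟨by linarith, hF1le⟩)
  have hQex : ∃ i, 1/2 < G i ∧ i ≤ N := ⟨j₀ - 1, hGj, by omega⟩
  set i₀ := Nat.find hQex with hi₀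
  have hi₀G : 1/2 < G i₀ := (Nat.find_spec hQex).1
  have hi₀N : i₀ ≤ N := (Nat.find_spec hQex).2
  have hi₀le : i₀ ≤ j₀ - 1 := Nat.find_le ⟨hGj, by omega⟩
  have hi₀pos : i₀ ≠ 0 := by
    intro h
    rw [h] at hi₀G
    linarith
  have h2 : ¬(1/2 < G (i₀ - 1) ∧ i₀ - 1 ≤ N) := Nat.find_min hQex (by omega)
  have hG1le : G (i₀ - 1) ≤ 1/2 := by
    by_contra hcon
    exact h2 ⟨by linarith, by omega⟩
  have hstep2 : |G (i₀ - 1 + 1) - G (i₀ - 1)| ≤ 1 := hG _ (by omega)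
  rw [show i₀ - 1 + 1 = i₀ by omega] at hstep2
  have hG1ge : -(1/2) < G (i₀ - 1) := by
    have := abs_le.mp hstep2
    linarith [this.1, this.2]
  have hFi : 1/2 < F (i₀ - 1) := hBA _ (by omega) (abs_le.mpr ⟨by linarith, hG1le⟩)
  have : j₀ ≤ i₀ - 1 := Nat.find_le ⟨hFi, by omega⟩
  omega

end Aux2
section Aux3

variable {X : Type*} [MetricSpace X]

lemma Curtain.mem_carrier_iff (A : Curtain X) (x : X) :
    x ∈ A.carrier ↔ |A.geo.proj x - A.r| ≤ 1/2 := by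
  show A.geo.proj x ∈ Icc (A.r - 1/2) (A.r + 1/2) ↔ _
  rw [mem_Icc, abs_le]
  constructor <;> intro h <;> exact ⟨by linarith [h.1], by linarith [h.2]⟩

lemma Curtain.side_trichotomy (A : Curtain X) (x : X) (hx : x ∉ A.carrier) :
    x ∈ A.minus ∨ x ∈ A.plus := by
  rw [Curtain.mem_carrier_iff, not_le, lt_abs] at hx
  rcases hx with h | h
  · right; show A.r + 1/2 < A.geo.proj x; linarith
  · left; show A.geo.proj x < A.r - 1/2; linarith

/-- Key crossing contradiction: if `z` lies strictly on the negative side of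
both curtains `A` and `B`, while `A`'s carrier is strictly on the positive side
of `B` and vice versa, with `w ∈ B.carrier`, we get a contradiction. -/
lemma key [CAT0 X] (A B : Curtain X) (z w : X) (eA eB : ℝ)
    (hA1 : |eA| = 1) (hB1 : |eB| = 1) (hw : w ∈ B.carrier)
    (hz1 : eA * (A.geo.proj z - A.r) < -(1/2))
    (hz2 : eB * (B.geo.proj z - B.r) < -(1/2))
    (hAB : ∀ u ∈ A.carrier, 1/2 < eB * (B.geo.proj u - B.r))
    (hBA : ∀ u ∈ B.carrier, 1/2 < eA * (A.geo.proj u - A.r)) : False := by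
  obtain ⟨M, hM⟩ : ∃ M : ℕ, dist z w ≤ 2 ^ M := by
    obtain ⟨m, hm⟩ := exists_nat_ge (dist z w)
    refine ⟨m, hm.trans ?_⟩
    exact_mod_cast (Nat.lt_two_pow_self (n := m)).le
  obtain ⟨p, hp0, hpN, hcons⟩ := midchain z w M
  set N := 2 ^ M with hN
  have hNpos : (0:ℝ) < 2 ^ M := by positivity
  have hδ : dist z w / 2 ^ M ≤ 1 := by
    rw [div_le_one hNpos]
    exact hM
  have hstep : ∀ (g : Geodesic X) (e : ℝ), |e| = 1 → ∀ i, i < N →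
      |e * (g.proj (p (i+1)) - g.proj (p i))| ≤ 1 := by
    intro g e he i hi
    rw [abs_mul, he, one_mul]
    calc |g.proj (p (i+1)) - g.proj (p i)| ≤ dist (p (i+1)) (p i) := dist_proj_le g _ _
      _ = dist (p i) (p (i+1)) := dist_comm _ _
      _ ≤ 1 := by rw [hcons i hi]; exact hδ
  set F : ℕ → ℝ := fun i => eA * (A.geo.proj (p i) - A.r) with hF
  set G : ℕ → ℝ := fun i => eB * (B.geo.proj (p i) - B.r) with hG
  refine disc F G N ?_ ?_ ?_ ?_ ?_ ?_ ?_
  · intro i hi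
    have := hstep A.geo eA hA1 i hi
    have e : F (i+1) - F i = eA * (A.geo.proj (p (i+1)) - A.geo.proj (p i)) := by
      simp only [hF]; ring
    rwa [e]
  · intro i hi
    have := hstep B.geo eB hB1 i hi
    have e : G (i+1) - G i = eB * (B.geo.proj (p (i+1)) - B.geo.proj (p i)) := by
      simp only [hG]; ring
    rwa [e]
  · simpa [hF, hp0] using hz1
  · simpa [hG, hp0] using hz2
  · have : F N = eA * (A.geo.proj w - A.r) := by simp [hF, hpN]
    rw [this]
    exact hBA w hw
  · intro i _ hFi
    refine hAB (p i) ?_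
    rw [Curtain.mem_carrier_iff]
    calc |A.geo.proj (p i) - A.r| = |eA| * |A.geo.proj (p i) - A.r| := by rw [hA1, one_mul]
      _ = |F i| := by rw [← abs_mul]
      _ ≤ 1/2 := hFi
  · intro i _ hGi
    refine hBA (p i) ?_
    rw [Curtain.mem_carrier_iff]
    calc |B.geo.proj (p i) - B.r| = |eB| * |B.geo.proj (p i) - B.r| := by rw [hB1, one_mul]
      _ = |G i| := by rw [← abs_mul]
      _ ≤ 1/2 := hGi

lemma sep_symm {A : Curtain X} {S T : Set X} (h : A.SeparatesSets S T) :
    A.SeparatesSets T S := by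
  rcases h with ⟨h1, h2⟩ | ⟨h1, h2⟩
  · exact Or.inr ⟨h2, h1⟩
  · exact Or.inl ⟨h2, h1⟩

/-- Transfer of separation along a chain. -/
lemma sep_trans [CAT0 X] (A B C : Curtain X) (S : Set X)
    (h1 : A.SeparatesSets S B.carrier)
    (h2 : B.SeparatesSets A.carrier C.carrier)
    (hAC : Disjoint A.carrier C.carrier) :
    A.SeparatesSets S C.carrier := by
  obtain ⟨w, hw⟩ := B.carrier_nonempty
  have main : ∀ eA : ℝ, |eA| = 1 →
      (∀ u ∈ B.carrier, 1/2 < eA * (A.geo.proj u - A.r)) →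
      ∀ z ∈ C.carrier, ¬ (eA * (A.geo.proj z - A.r) < -(1/2)) := by
    intro eA heA hB z hz hcon
    have hzB : ∃ eB : ℝ, |eB| = 1 ∧ eB * (B.geo.proj z - B.r) < -(1/2) ∧
        (∀ u ∈ A.carrier, 1/2 < eB * (B.geo.proj u - B.r)) := by
      rcases h2 with ⟨hA2, hC2⟩ | ⟨hA2, hC2⟩
      · -- A ⊆ B.minus, C ⊆ B.plus
        refine ⟨-1, by norm_num, ?_, ?_⟩
        · have := hC2 hz
          have hzp : B.r + 1/2 < B.geo.proj z := this
          linarith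
        · intro u hu
          have := hA2 hu
          have hum : B.geo.proj u < B.r - 1/2 := this
          linarith
      · refine ⟨1, by norm_num, ?_, ?_⟩
        · have := hC2 hz
          have hzm : B.geo.proj z < B.r - 1/2 := this
          linarith
        · intro u hu
          have := hA2 hu
          have hup : B.r + 1/2 < B.geo.proj u := this
          linarith
    obtain ⟨eB, heB, hzB1, hzB2⟩ := hzB
    exact key A B z w eA eB heA heB hw hcon hzB1 hzB2 hB
  rcases h1 with ⟨hS, hB⟩ | ⟨hS, hB⟩
  · -- S ⊆ A.minus, B ⊆ A.plus; show C ⊆ A.plus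
    refine Or.inl ⟨hS, ?_⟩
    intro z hz
    have hzn : z ∉ A.carrier := fun h => (Set.disjoint_left.mp hAC h) hz
    rcases A.side_trichotomy z hzn with hm | hp
    · exfalso
      refine main 1 (by norm_num) ?_ z hz ?_
      · intro u hu
        have := hB hu
        have : A.r + 1/2 < A.geo.proj u := this
        linarith
      · have : A.geo.proj z < A.r - 1/2 := hm
        linarith
    · exact hp
  · refine Or.inr ⟨hS, ?_⟩
    intro z hz
    have hzn : z ∉ A.carrier := fun h => (Set.disjoint_left.mp hAC h) hz
    rcases A.side_trichotomy z hzn with hm | hp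
    · exact hm
    · exfalso
      refine main (-1) (by norm_num) ?_ z hz ?_
      · intro u hu
        have := hB hu
        have : A.geo.proj u < A.r - 1/2 := this
        linarith
      · have : A.r + 1/2 < A.geo.proj z := hp
        linarith

end Aux3
section Aux4

variable {X : Type*} [MetricSpace X]

/-- In a chain, every middle curtain separates every earlier one from every
later one. -/
lemma nest [CAT0 X] {n : ℕ} {c : Fin n → Curtain X} (hc : IsChainSeq c)
    {i j k : ℕ} (hij : i < j) (hjk : j < k) (hk : k < n) :
    (c ⟨j, by omega⟩).SeparatesSets (c ⟨i, by omega⟩).carrier (c ⟨k, hk⟩).carrier := by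
  have main : ∀ d i j k : ℕ, ∀ (_ : i < j) (_ : j < k) (hkn : k < n) (_ : k - i ≤ d + 2),
      (c ⟨j, by omega⟩).SeparatesSets (c ⟨i, by omega⟩).carrier (c ⟨k, hkn⟩).carrier := by
    intro d
    induction d with
    | zero =>
      intro i j k hij hjk hk hd
      have hji : j = i + 1 := by omega
      have hki : k = i + 2 := by omega
      subst hji hki
      exact hc.2 ⟨i, by omega⟩ ⟨i+1, by omega⟩ ⟨i+2, by omega⟩ rfl rfl
    | succ d ih =>
      intro i j k hij hjk hk hd
      by_cases hsmall : k - i ≤ d + 2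
      · exact ih i j k hij hjk hk hsmall
      have hki : k - i = d + 3 := by omega
      by_cases hjk1 : j + 1 = k
      · -- mirrored case: j = k - 1
        have hi1j : i + 1 < j := by omega
        have H1 := ih (i+1) j k hi1j hjk hk (by omega)
        have H2 := ih i (i+1) j (by omega) hi1j (by omega) (by omega)
        have hd2 : Disjoint (c ⟨j, by omega⟩).carrier (c ⟨i, by omega⟩).carrier := by
          refine hc.1 _ _ ?_
          simp only [ne_eq, Fin.mk.injEq]
          omega
        exact sep_symm (sep_trans _ _ _ _ (sep_symm H1) (sep_symm H2) hd2)
      · have hjk2 : j < k - 1 := by omega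
        have H1 := ih i j (k-1) hij hjk2 (by omega) (by omega)
        have H2 := ih j (k-1) k hjk2 (by omega) hk (by omega)
        have hd2 : Disjoint (c ⟨j, by omega⟩).carrier (c ⟨k, by omega⟩).carrier := by
          refine hc.1 _ _ ?_
          simp only [ne_eq, Fin.mk.injEq]
          omega
        have := sep_trans (c ⟨j, by omega⟩) (c ⟨k-1, by omega⟩) (c ⟨k, by omega⟩)
          (c ⟨i, by omega⟩).carrier H1 ?_ hd2
        · exact this
        · convert H2 using 2 <;> omega
  exact main (k - i) i j k hij hjk hk (by omega)

end Aux4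
section Aux5

variable {X : Type*} [MetricSpace X]

set_option maxHeartbeats 1000000 in
/-- Main counting bound: a chain of `n ≥ 3` curtains all meeting a closed ball
of radius `r` satisfies `n - 2 < 2r`. -/
lemma chain_ball_bound [CAT0 X] {n : ℕ} (c : Fin n → Curtain X) (hc : IsChainSeq c)
    (hn : 3 ≤ n) (x₀ : X) (r : ℝ)
    (hmeet : ∀ i, ((c i).carrier ∩ closedBall x₀ r).Nonempty) :
    (n : ℝ) - 2 < 2 * r := by
  classical
  choose y hy using hmeet
  have hy1 : ∀ i, y i ∈ (c i).carrier := fun i => (hy i).1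
  have hy2 : ∀ i, dist (y i) x₀ ≤ r := fun i => mem_closedBall.mp (hy i).2
  set i₀ : Fin n := ⟨0, by omega⟩
  set iₗ : Fin n := ⟨n - 1, by omega⟩
  set y₀ := y i₀ with hy₀
  set yₗ := y iₗ with hyₗ
  set D := dist y₀ yₗ with hDdef
  have hD2r : D ≤ 2 * r := by
    calc D ≤ dist y₀ x₀ + dist x₀ yₗ := dist_triangle _ _ _
      _ ≤ r + r := add_le_add (hy2 i₀) (by rw [dist_comm]; exact hy2 iₗ)
      _ = 2 * r := by ring
  -- orientations
  have He : ∀ jf : Fin n, ∃ e : ℝ, ∀ (_ : 0 < (jf : ℕ)) (_ : (jf : ℕ) < n - 1),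
      |e| = 1 ∧ e * ((c jf).geo.proj y₀ - (c jf).r) < -(1/2) ∧
      1/2 < e * ((c jf).geo.proj yₗ - (c jf).r) := by
    rintro ⟨j, hjn⟩
    by_cases hj : 0 < j ∧ j < n - 1
    · obtain ⟨h1, h2⟩ := hj
      have hsep := nest hc h1 (show j < n - 1 from h2) (show n - 1 < n by omega)
      rcases hsep with ⟨hS, hT⟩ | ⟨hS, hT⟩
      · refine ⟨1, fun _ _ => ⟨by norm_num, ?_, ?_⟩⟩
        · have h' : (c ⟨j, hjn⟩).geo.proj y₀ < (c ⟨j, hjn⟩).r - 1/2 := hS (hy1 i₀)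
          linarith
        · have h' : (c ⟨j, hjn⟩).r + 1/2 < (c ⟨j, hjn⟩).geo.proj yₗ := hT (hy1 iₗ)
          linarith
      · refine ⟨-1, fun _ _ => ⟨by norm_num, ?_, ?_⟩⟩
        · have h' : (c ⟨j, hjn⟩).r + 1/2 < (c ⟨j, hjn⟩).geo.proj y₀ := hS (hy1 i₀)
          linarith
        · have h' : (c ⟨j, hjn⟩).geo.proj yₗ < (c ⟨j, hjn⟩).r - 1/2 := hT (hy1 iₗ)
          linarith
    · exact ⟨1, fun h1 h2 => absurd ⟨h1, h2⟩ hj⟩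
  choose eF heF using He
  set ηval : ℕ → ℝ := fun j =>
    if h : j < n then
      -(1/2) - eF ⟨j, h⟩ * ((c ⟨j, h⟩).geo.proj y₀ - (c ⟨j, h⟩).r) else 1
    with hηval
  set Fs : Finset ℕ := Finset.Ioo 0 (n - 1) with hFs
  have hFs_ne : Fs.Nonempty := ⟨1, by rw [hFs, Finset.mem_Ioo]; omega⟩
  have hFsmem : ∀ j ∈ Fs, 0 < j ∧ j < n - 1 := by
    intro j hj; rw [hFs, Finset.mem_Ioo] at hj; exact hj
  set η := Fs.inf' hFs_ne ηval with hη
  have hηval_pos : ∀ j ∈ Fs, 0 < ηval j := by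
    intro j hj
    obtain ⟨h1, h2⟩ := hFsmem j hj
    have hjn : j < n := by omega
    rw [hηval]
    simp only [dif_pos hjn]
    have := (heF ⟨j, hjn⟩ h1 h2).2.1
    linarith
  have hηpos : 0 < η := by
    rw [hη, Finset.lt_inf'_iff]
    exact hηval_pos
  have hηle : ∀ j ∈ Fs, η ≤ ηval j := fun j hj => Finset.inf'_le ηval hj
  -- D > 1
  have hD1 : 1 < D := by
    have hjn : (1:ℕ) < n := by omega
    obtain ⟨he1, hey0, heyl⟩ := heF ⟨1, hjn⟩ (by show 0 < (1:ℕ); norm_num)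
      (by show (1:ℕ) < n - 1; omega)
    set A := c ⟨1, hjn⟩ with hA
    have hlip := dist_proj_le A.geo yₗ y₀
    have h2 : eF ⟨1, hjn⟩ * (A.geo.proj yₗ - A.geo.proj y₀) > 1 := by
      have he : eF ⟨1, hjn⟩ * (A.geo.proj yₗ - A.geo.proj y₀)
          = eF ⟨1, hjn⟩ * (A.geo.proj yₗ - A.r) - eF ⟨1, hjn⟩ * (A.geo.proj y₀ - A.r) := by
        ring
      rw [he]; linarith
    have h3 : eF ⟨1, hjn⟩ * (A.geo.proj yₗ - A.geo.proj y₀)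
        ≤ |A.geo.proj yₗ - A.geo.proj y₀| := by
      calc eF ⟨1, hjn⟩ * (A.geo.proj yₗ - A.geo.proj y₀)
          ≤ |eF ⟨1, hjn⟩ * (A.geo.proj yₗ - A.geo.proj y₀)| := le_abs_self _
        _ = |A.geo.proj yₗ - A.geo.proj y₀| := by rw [abs_mul, he1, one_mul]
    calc (1:ℝ) < eF ⟨1, hjn⟩ * (A.geo.proj yₗ - A.geo.proj y₀) := h2
      _ ≤ |A.geo.proj yₗ - A.geo.proj y₀| := h3
      _ ≤ dist yₗ y₀ := hlip
      _ = D := dist_comm _ _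
  have hD0 : 0 < D := by linarith
  -- the per-scale estimate
  have perM : ∀ M : ℕ, ((n:ℝ) - 2) * (1 - 2 * (D / 2 ^ M)) ≤ D - η := by
    intro M
    set N : ℕ := 2 ^ M with hN
    set δ : ℝ := D / 2 ^ M with hδdef
    have hNR : ((N : ℕ) : ℝ) = (2:ℝ) ^ M := by rw [hN]; push_cast; ring
    have hNpos : (0:ℝ) < (2:ℝ) ^ M := by positivity
    have hδpos : 0 < δ := div_pos hD0 hNpos
    obtain ⟨p, hp0, hpN, hcons⟩ := midchain y₀ yₗ M
    have hcons' : ∀ i, i < N → dist (p i) (p (i+1)) = δ := fun i hi => hcons i hi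
    have htot : dist (p 0) (p N) = (N : ℕ) * δ := by
      rw [hp0, hpN, hNR, hδdef]
      field_simp
      exact hDdef.symm
    have cd := chain_dist p N δ hδpos.le hcons' htot
    have hND : ((N:ℕ):ℝ) * δ = D := by
      rw [hNR, hδdef]; field_simp
    have gridd : ∀ i j : ℕ, i ≤ N → j ≤ N → dist (p i) (p j) = |(i:ℝ) - (j:ℝ)| * δ := by
      intro i j hi hj
      rcases le_total i j with h | h
      · rw [cd i j h hj]
        congr 1
        rw [abs_sub_comm, abs_of_nonneg (sub_nonneg.mpr (by exact_mod_cast h)),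
          Nat.cast_sub h]
      · rw [dist_comm, cd j i h hi]
        congr 1
        rw [abs_of_nonneg (sub_nonneg.mpr (by exact_mod_cast h)), Nat.cast_sub h]
    -- per-curtain crossing intervals
    have main : ∀ j : ℕ, ∃ v u : ℝ, ∀ (_ : 0 < j) (h2 : j < n - 1),
        η ≤ v ∧ v + 1 ≤ u ∧ u ≤ D ∧
        ∀ i : ℕ, i ≤ N → (i:ℝ) * δ ∈ Set.Ioo v u → p i ∈ (c ⟨j, by omega⟩).carrier := by
      intro j
      by_cases hj : 0 < j ∧ j < n - 1
      · obtain ⟨h1, h2⟩ := hj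
        have hjn : j < n := by omega
        set A := c ⟨j, hjn⟩ with hA
        obtain ⟨he1, hey0, heyl⟩ := heF ⟨j, hjn⟩ h1 h2
        set e := eF ⟨j, hjn⟩ with he
        set f : ℝ → ℝ := fun t => e * (A.geo.proj (p (Nat.floor (t / δ))) - A.r) with hf
        set S : Set ℝ := (fun i : ℕ => (i:ℝ) * δ) '' (Set.Iic N) with hS
        have hfS : ∀ i : ℕ, f ((i:ℝ) * δ) = e * (A.geo.proj (p i) - A.r) := by
          intro i
          rw [hf]
          simp only
          rw [mul_div_cancel_right₀ _ (ne_of_gt hδpos), Nat.floor_natCast]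
        have hlip : LipschitzOnWith 1 f S := by
          refine LipschitzOnWith.of_dist_le_mul ?_
          rintro t ⟨i, hi, rfl⟩ t' ⟨i', hi', rfl⟩
          rw [Real.dist_eq, Real.dist_eq, hfS, hfS]
          have e1 : e * (A.geo.proj (p i) - A.r) - e * (A.geo.proj (p i') - A.r)
              = e * (A.geo.proj (p i) - A.geo.proj (p i')) := by ring
          rw [e1, abs_mul, he1, one_mul]
          have := dist_proj_le A.geo (p i) (p i')
          have e2 : |(i:ℝ) * δ - (i':ℝ) * δ| = |(i:ℝ) - (i':ℝ)| * δ := by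
            rw [← sub_mul, abs_mul, abs_of_pos hδpos]
          rw [NNReal.coe_one, one_mul, e2, ← gridd i i' hi hi']
          exact this
        obtain ⟨G, hGlip, hGeq⟩ := hlip.extend_real
        have hGlip' : ∀ s t : ℝ, |G s - G t| ≤ |s - t| := by
          intro s t
          have := hGlip.dist_le_mul s t
          rwa [Real.dist_eq, Real.dist_eq, NNReal.coe_one, one_mul] at this
        have hGgrid : ∀ i : ℕ, i ≤ N → G ((i:ℝ) * δ) = e * (A.geo.proj (p i) - A.r) := by
          intro i hi
          rw [← hGeq ⟨i, hi, rfl⟩, hfS]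
        have hG0 : G 0 = e * (A.geo.proj y₀ - A.r) := by
          have := hGgrid 0 (Nat.zero_le N)
          simp only [Nat.cast_zero, zero_mul] at this
          rw [this, hp0]
        have hGD : G D = e * (A.geo.proj yₗ - A.r) := by
          have := hGgrid N le_rfl
          rw [hND] at this
          rw [this, hpN]
        have hG0' : G 0 < -(1/2) := by rw [hG0]; exact hey0
        have hGD' : 1/2 < G D := by rw [hGD]; exact heyl
        -- first exit time
        set U : Set ℝ := Set.Icc 0 D ∩ {t | 1/2 ≤ G t} with hU
        have hUc : IsClosed U := isClosed_Icc.inter (isClosed_le continuous_const hGlip.continuous)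
        have hUne : U.Nonempty := ⟨D, ⟨hD0.le, le_rfl⟩, hGD'.le⟩
        have hUb : BddBelow U := ⟨0, fun t ht => ht.1.1⟩
        set u := sInf U with hu_def
        have hu : u ∈ U := hUc.csInf_mem hUne hUb
        have humin : ∀ t ∈ U, u ≤ t := fun t ht => csInf_le hUb ht
        have hu0 : 0 ≤ u := hu.1.1
        have huD : u ≤ D := hu.1.2
        have hGu : 1/2 ≤ G u := hu.2
        -- last entry time before u
        set V : Set ℝ := Set.Icc 0 u ∩ {t | G t ≤ -(1/2)} with hV
        have hVc : IsClosed V := isClosed_Icc.inter (isClosed_le hGlip.continuous continuous_const)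
        have h0V : (0:ℝ) ∈ V := ⟨⟨le_rfl, hu0⟩, hG0'.le⟩
        have hVb : BddAbove V := ⟨u, fun t ht => ht.1.2⟩
        set v := sSup V with hv_def
        have hv : v ∈ V := hVc.csSup_mem ⟨0, h0V⟩ hVb
        have hvmax : ∀ t ∈ V, t ≤ v := fun t ht => le_csSup hVb ht
        have hv0 : 0 ≤ v := hv.1.1
        have hvu : v ≤ u := hv.1.2
        have hGv : G v ≤ -(1/2) := hv.2
        have huv1 : v + 1 ≤ u := by
          have := hGlip' u v
          have h1' : G u - G v ≤ |G u - G v| := le_abs_self _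
          have h2' : |u - v| = u - v := abs_of_nonneg (by linarith)
          rw [h2'] at this
          linarith
        -- v is at least ηval j
        have hηj : ηval j = -(1/2) - e * (A.geo.proj y₀ - A.r) := by
          rw [hηval]
          simp only [dif_pos hjn]
          rfl
        have hηjpos : 0 < ηval j := hηval_pos j (by rw [hFs, Finset.mem_Ioo]; omega)
        have hηju : ηval j ≤ u := by
          by_contra hcon
          push_neg at hcon
          have hb := hGlip' u 0
          simp only [sub_zero] at hb
          rw [abs_of_nonneg hu0] at hb
          have : G u ≤ G 0 + u := by
            have := abs_le.mp hb
            linarith [this.1, this.2]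
          rw [hG0] at this
          rw [hηj] at hcon
          linarith
        have hηjV : ηval j ∈ V := by
          refine ⟨⟨hηjpos.le, hηju⟩, ?_⟩
          show G (ηval j) ≤ -(1/2)
          have hb := hGlip' (ηval j) 0
          simp only [sub_zero] at hb
          rw [abs_of_nonneg hηjpos.le] at hb
          have : G (ηval j) ≤ G 0 + ηval j := by
            have := abs_le.mp hb
            linarith [this.1, this.2]
          rw [hG0] at this
          rw [hηj]  at this ⊢
          linarith
        have hηv : η ≤ v := by
          have := hvmax _ hηjV
          have h2' := hηle j (by rw [hFs, Finset.mem_Ioo]; omega)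
          linarith
        -- grid points inside (v,u) lie in the carrier
        refine ⟨v, u, fun _ _ => ⟨hηv, huv1, huD, ?_⟩⟩
        intro i hi hio
        have hGi := hGgrid i hi
        have hlow : -(1/2) < G ((i:ℝ) * δ) := by
          by_contra hcon
          push_neg at hcon
          have : ((i:ℝ) * δ) ∈ V := ⟨⟨by positivity, hio.2.le⟩, hcon⟩
          have := hvmax _ this
          linarith [hio.1]
        have hhigh : G ((i:ℝ) * δ) < 1/2 := by
          by_contra hcon
          push_neg at hcon
          have : ((i:ℝ) * δ) ∈ U := ⟨⟨by positivity, hio.2.le.trans huD⟩, hcon⟩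
          have := humin _ this
          linarith [hio.2]
        rw [Curtain.mem_carrier_iff]
        have habs : |A.geo.proj (p i) - A.r| = |G ((i:ℝ) * δ)| := by
          rw [hGi, abs_mul, he1, one_mul]
        rw [show (c ⟨j, hjn⟩) = A from rfl, habs]
        exact abs_le.mpr ⟨hlow.le, hhigh.le⟩
      · exact ⟨0, 0, fun h1 h2 => absurd ⟨h1, h2⟩ hj⟩
    choose vF uF hvu using main
    set J : ℕ → Set ℝ := fun j => Set.Ioo (vF j + δ) (uF j - δ) with hJ
    -- pairwise disjointness of the shrunken intervals
    have hdisjJ : (↑Fs : Set ℕ).PairwiseDisjoint J := by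
      intro a ha b hb hab
      simp only [Finset.coe_sort_coe, Finset.mem_coe] at ha hb
      obtain ⟨ha1, ha2⟩ := hFsmem a ha
      obtain ⟨hb1, hb2⟩ := hFsmem b hb
      obtain ⟨hva, hua1, huaD, hmema⟩ := hvu a ha1 ha2
      obtain ⟨hvb, hub1, hubD, hmemb⟩ := hvu b hb1 hb2
      show Disjoint (J a) (J b)
      rw [Set.disjoint_left]
      intro t hta htb
      rw [hJ] at hta htb
      obtain ⟨hta1, hta2⟩ := hta
      obtain ⟨htb1, htb2⟩ := htb
      set iz : ℤ := round (t / δ) with hiz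
      have hr1 : |t / δ - (iz:ℝ)| ≤ 1/2 := abs_sub_round (t / δ)
      have hziδ : |(iz:ℝ) * δ - t| ≤ δ / 2 := by
        have e1 : (iz:ℝ) * δ - t = -((t / δ - iz) * δ) := by
          field_simp
          ring
        rw [e1, abs_neg, abs_mul, abs_of_pos hδpos]
        calc |t / δ - (iz:ℝ)| * δ ≤ (1/2) * δ :=
              mul_le_mul_of_nonneg_right hr1 hδpos.le
          _ = δ / 2 := by ring
      have htpos : η + δ < t := by
        have := hηle a (by rw [hFs, Finset.mem_Ioo]; omega)
        linarith
      have hizpos : 0 ≤ iz := by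
        have h1' : 0 < (iz:ℝ) * δ := by
          have := abs_le.mp hziδ
          have h2' : (iz:ℝ) * δ ≥ t - δ/2 := by linarith [this.1]
          have : δ / 2 < t := by linarith [hηpos]
          linarith
        by_contra hcon
        push_neg at hcon
        have : (iz:ℝ) ≤ 0 := by exact_mod_cast hcon.le
        nlinarith
      set k : ℕ := iz.toNat with hk
      have hkr : (k:ℝ) = (iz:ℝ) := by
        rw [hk]
        exact_mod_cast Int.toNat_of_nonneg hizpos
      have hkio_a : (k:ℝ) * δ ∈ Set.Ioo (vF a) (uF a) := by
        rw [hkr]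
        constructor
        · have := abs_le.mp hziδ
          linarith [this.1]
        · have := abs_le.mp hziδ
          linarith [this.2]
      have hkio_b : (k:ℝ) * δ ∈ Set.Ioo (vF b) (uF b) := by
        rw [hkr]
        constructor
        · have := abs_le.mp hziδ
          linarith [this.1]
        · have := abs_le.mp hziδ
          linarith [this.2]
      have hkN : k ≤ N := by
        have h1' : (k:ℝ) * δ < D := lt_of_lt_of_le hkio_a.2 huaD
        rw [← hND] at h1'
        have h2' : (k:ℝ) < (N:ℝ) := by
          exact lt_of_mul_lt_mul_right (by linarith) hδpos.le
        exact_mod_cast h2'.le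
      have hmA := hmema k hkN hkio_a
      have hmB := hmemb k hkN hkio_b
      have hne : (⟨a, by omega⟩ : Fin n) ≠ ⟨b, by omega⟩ := by
        simp only [ne_eq, Fin.mk.injEq]
        exact hab
      exact Set.disjoint_left.mp (hc.1 _ _ hne) hmA hmB
    -- measure counting
    have hμ := MeasureTheory.measure_biUnion_finset (μ := MeasureTheory.volume) hdisjJ
      (fun j _ => measurableSet_Ioo (a := vF j + δ) (b := uF j - δ))
    have hsub : (⋃ j ∈ Fs, J j) ⊆ Set.Ioo η D := by
      intro t ht
      simp only [Set.mem_iUnion] at ht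
      obtain ⟨j, hj, htj⟩ := ht
      obtain ⟨h1, h2⟩ := hFsmem j hj
      obtain ⟨hvj, huj1, hujD, _⟩ := hvu j h1 h2
      rw [hJ] at htj
      exact ⟨by linarith [htj.1], by linarith [htj.2]⟩
    have hle : ∑ j ∈ Fs, MeasureTheory.volume (J j) ≤ ENNReal.ofReal (D - η) := by
      rw [← hμ, ← Real.volume_Ioo]
      exact MeasureTheory.measure_mono hsub
    have hlow : ∀ j ∈ Fs, ENNReal.ofReal (1 - 2*δ) ≤ MeasureTheory.volume (J j) := by
      intro j hj
      obtain ⟨h1, h2⟩ := hFsmem j hj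
      obtain ⟨hvj, huj1, hujD, _⟩ := hvu j h1 h2
      rw [hJ]
      simp only
      rw [Real.volume_Ioo]
      exact ENNReal.ofReal_le_ofReal (by linarith)
    have hcs := Finset.card_nsmul_le_sum Fs _ _ hlow
    have hcard : Fs.card = n - 2 := by
      rw [hFs, Nat.card_Ioo]
      omega
    rw [hcard, nsmul_eq_mul] at hcs
    have hfin : ENNReal.ofReal (((n - 2 : ℕ):ℝ) * (1 - 2*δ)) ≤ ENNReal.ofReal (D - η) := by
      rw [ENNReal.ofReal_mul (by positivity), ENNReal.ofReal_natCast]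
      exact le_trans hcs hle
    have hDη : 0 ≤ D - η := by
      obtain ⟨hv1, hu1, huD1, _⟩ := hvu 1 (by omega) (by omega)
      linarith
    have hreal := (ENNReal.ofReal_le_ofReal_iff hDη).mp hfin
    have hcast : ((n - 2 : ℕ):ℝ) = (n:ℝ) - 2 := by
      rw [Nat.cast_sub (by omega)]
      norm_num
    rw [hcast] at hreal
    exact hreal
  -- pass to the limit
  have hlim : (n:ℝ) - 2 ≤ D - η := by
    by_contra hcon
    push_neg at hcon
    set ε := ((n:ℝ) - 2) - (D - η) with hεdef
    have hεpos : 0 < ε := by rw [hεdef]; linarith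
    obtain ⟨m, hm⟩ := exists_nat_ge (2*((n:ℝ)-2)*D/(ε/2))
    have h2m : 2*((n:ℝ)-2)*D/(ε/2) ≤ (2:ℝ)^m := by
      refine hm.trans ?_
      exact_mod_cast (Nat.lt_two_pow_self (n := m)).le
    have hp : (0:ℝ) < (2:ℝ)^m := by positivity
    have hn2 : (0:ℝ) ≤ (n:ℝ) - 2 := by
      have : (3:ℝ) ≤ n := by exact_mod_cast hn
      linarith
    have hdd : 2*((n:ℝ)-2)*D ≤ (ε/2) * 2^m := by
      have := (div_le_iff₀ (half_pos hεpos)).mp h2m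
      linarith
    have hsmall : 2*((n:ℝ)-2)*(D / 2^m) ≤ ε/2 := by
      rw [show 2*((n:ℝ)-2)*(D / 2^m) = (2*((n:ℝ)-2)*D)/2^m by ring]
      rw [div_le_iff₀ hp]
      linarith
    have := perM m
    have hε2 : ε ≤ 2*((n:ℝ)-2)*(D / 2^m) := by nlinarith
    linarith
  linarith [hlim, hηpos, hD2r]

end Aux5

/-- if two disjoint curtains are not `L`-separated, then some
curtain meets both and misses any given ball of radius at most `(L-1)/2`. -/
theorem stmt18 {X : Type*} [MetricSpace X] [CAT0 X] (L : ℕ) (hL : 2 ≤ L)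
    (h₁ h₂ : Curtain X) (hdisj : Disjoint h₁.carrier h₂.carrier)
    (hnotsep : ¬ LSeparated (L : ℕ∞) h₁ h₂)
    (x₀ : X) (r : ℝ) (hr0 : 0 ≤ r) (hr : r ≤ ((L : ℝ) - 1) / 2) :
    ∃ k : Curtain X, Meets k h₁ ∧ Meets k h₂ ∧
      Disjoint k.carrier (closedBall x₀ r) := by
  classical
  have hforall : ¬ ∀ (n : ℕ) (c : Fin n → Curtain X), IsChainSeq c →
      (∀ i, Meets (c i) h₁ ∧ Meets (c i) h₂) → (n : ℕ∞) ≤ (L : ℕ∞) := by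
    intro h
    exact hnotsep ⟨hdisj, h⟩
  push_neg at hforall
  obtain ⟨n, c, hchain, hmeets, hgt⟩ := hforall
  have hgtn : L < n := by exact_mod_cast hgt
  have hn3 : 3 ≤ n := by omega
  by_contra hcon
  push_neg at hcon
  have hmeet : ∀ i, ((c i).carrier ∩ closedBall x₀ r).Nonempty := by
    intro i
    have := hcon (c i) (hmeets i).1 (hmeets i).2
    exact Set.not_disjoint_iff_nonempty_inter.mp this
  have hb := chain_ball_bound c hchain hn3 x₀ r hmeet
  have hrL : 2 * r ≤ (L : ℝ) - 1 := by linarith [hr]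
  have hnL : (L : ℝ) + 1 ≤ (n : ℝ) := by exact_mod_cast hgtn
  linarith

end Curtains
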